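/- Let G be a K_{2,2,2}-free hole-edge-disjoint simple graph with S_{C,e} ≠ ∅ for every hole C of G and every edge e of C. Fix a hole C* of G and an edge e* of C*, and let C be a hole of the subgraph of G induced by V(U_{C*,e*}) ∪ X_{C*,e*}. If there exists an edge e = uv of C such that T_{C,e} is not contained in V(U_{C*,e*}) ∪ X_{C*,e*}, then both u and v belong to X_{C*,e*}. -/

import Mathlib

open SimpleGraph

universe u

/-- A *hole* of a simple graph: an induced (chordless) cycle of length at least 4. -/
def IsHole {V : Type u} (G : SimpleGraph V) {v : V} (c : G.Walk v v) : Prop :=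
  c.IsCycle ∧ 4 ≤ c.length ∧
    ∀ x ∈ c.support, ∀ y ∈ c.support, G.Adj x y → s(x, y) ∈ c.edges

/-- A graph is *chordal* if it has no hole. -/
def Chordal {V : Type u} (G : SimpleGraph V) : Prop :=
  ∀ (v : V) (c : G.Walk v v), ¬ IsHole G c

/-- A graph is *hole-edge-disjoint* if any two of its holes either have the same edge set
or share no edge. -/
def HoleEdgeDisjoint {V : Type u} (G : SimpleGraph V) : Prop :=
  ∀ (u v : V) (c₁ : G.Walk u u) (c₂ : G.Walk v v), IsHole G c₁ → IsHole G c₂ →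
    ({e | e ∈ c₁.edges} = {e | e ∈ c₂.edges} ∨ ∀ e ∈ c₁.edges, e ∉ c₂.edges)

/-- The complete tripartite graph `K_{2,2,2}`. -/
def K222 : SimpleGraph (Fin 3 × Fin 2) where
  Adj a b := a.1 ≠ b.1
  symm := ⟨fun _ _ h => Ne.symm h⟩
  loopless := ⟨fun _ h => h rfl⟩

/-- A graph is `K_{2,2,2}`-free if it has no induced subgraph isomorphic to `K_{2,2,2}`. -/
def K222Free {V : Type u} (G : SimpleGraph V) : Prop :=
  ¬ ∃ f : Fin 3 × Fin 2 → V, Function.Injective f ∧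
      ∀ a b, G.Adj (f a) (f b) ↔ K222.Adj a b

/-- `X_C`: the set of vertices adjacent to every vertex of the hole `C`. -/
def holeNbrs {V : Type u} (G : SimpleGraph V) {v : V} (c : G.Walk v v) : Set V :=
  {x | ∀ y ∈ c.support, G.Adj x y}

/-- `V(C) ∪ X_C`. -/
def avoidSet {V : Type u} (G : SimpleGraph V) {v : V} (c : G.Walk v v) : Set V :=
  {x | x ∈ c.support} ∪ holeNbrs G c

/-- A `C`-avoiding path: a path none of whose internal vertices lie in `V(C) ∪ X_C`,
and, if it has length 1, at least one of its two vertices is not in `V(C) ∪ X_C`. -/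
def IsCAvoidingPath {V : Type u} (G : SimpleGraph V) {v : V} (c : G.Walk v v)
    {a b : V} (W : G.Walk a b) : Prop :=
  W.IsPath ∧
    (∀ x ∈ W.support, x ≠ a → x ≠ b → x ∉ avoidSet G c) ∧
    (W.length = 1 → a ∉ avoidSet G c ∨ b ∉ avoidSet G c)

/-- `S_{C,e}` for `e = ab`: all internal vertices of `C`-avoiding `(a,b)`-paths. -/
def Sset {V : Type u} (G : SimpleGraph V) {v : V} (c : G.Walk v v) (a b : V) : Set V :=
  {w | ∃ W : G.Walk a b, IsCAvoidingPath G c W ∧ w ∈ W.support ∧ w ≠ a ∧ w ≠ b}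

/-- `T_{C,e}` for `e = ab`: all vertices `w` such that `a w b` is a `C`-avoiding path. -/
def Tset {V : Type u} (G : SimpleGraph V) {v : V} (c : G.Walk v v) (a b : V) : Set V :=
  {w | ∃ (h₁ : G.Adj a w) (h₂ : G.Adj w b),
      IsCAvoidingPath G c (Walk.cons h₁ (Walk.cons h₂ Walk.nil))}

/-- `X_{C,e} = X_C ∪ {a, b}` for `e = ab`. -/
def Xce {V : Type u} (G : SimpleGraph V) {v : V} (c : G.Walk v v) (a b : V) : Set V :=
  holeNbrs G c ∪ {a, b}

/-- The number of connected components of a graph. -/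
noncomputable def numComponents {V : Type u} (G : SimpleGraph V) : ℕ :=
  Nat.card G.ConnectedComponent

/-- `X` is a vertex cut of `G` if `G − X` has more connected components than `G`. -/
def IsVertexCut {V : Type u} (G : SimpleGraph V) (X : Set V) : Prop :=
  numComponents G < numComponents (G.induce Xᶜ)

/-- A clique cut: a vertex cut which is a clique. -/
def IsCliqueCut {V : Type u} (G : SimpleGraph V) (X : Set V) : Prop :=
  G.IsClique X ∧ IsVertexCut G X

/-- `U` is a union of connected components of `G − X`. -/
def IsComponentUnion {V : Type u} (G : SimpleGraph V) (X U : Set V) : Prop :=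
  U ⊆ Xᶜ ∧ ∀ a b : ↥(Xᶜ), (G.induce Xᶜ).Reachable a b → ((a : V) ∈ U ↔ (b : V) ∈ U)

/-- A chordal cut: a clique cut `X` such that there is a (nonempty) union `U` of
connected components of `G − X` with `G[U ∪ X]` chordal. -/
def IsChordalCut {V : Type u} (G : SimpleGraph V) (X : Set V) : Prop :=
  IsCliqueCut G X ∧
    ∃ U : Set V, U.Nonempty ∧ IsComponentUnion G X U ∧ Chordal (G.induce (U ∪ X))

/-- `x` lies in `Q_{C,e}`, the connected component of `G − X_{C,e}` containing
`V(C) \ {a, b}` (for `e = ab`). -/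
def InQ {V : Type u} (G : SimpleGraph V) {v : V} (c : G.Walk v v) (a b : V) (x : V) : Prop :=
  ∃ (hx : x ∈ (Xce G c a b)ᶜ) (y : V) (hy : y ∈ (Xce G c a b)ᶜ),
    y ∈ c.support ∧ y ≠ a ∧ y ≠ b ∧ (G.induce (Xce G c a b)ᶜ).Reachable ⟨x, hx⟩ ⟨y, hy⟩

/-- The vertex set of `U_{C,e}`: the union of the connected components of
`G − X_{C,e}` other than `Q_{C,e}` containing a vertex of `T_{C,e}`. -/
def Uset {V : Type u} (G : SimpleGraph V) {v : V} (c : G.Walk v v) (a b : V) : Set V :=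
  {x | ∃ hx : x ∈ (Xce G c a b)ᶜ, ¬ InQ G c a b x ∧
      ∃ (t : V) (ht : t ∈ (Xce G c a b)ᶜ), t ∈ Tset G c a b ∧ ¬ InQ G c a b t ∧
        (G.induce (Xce G c a b)ᶜ).Reachable ⟨x, hx⟩ ⟨t, ht⟩}

/-- `G` has the chordal property: there are a hole `C` and an edge `e` of `C` such that
`G[V(U_{C,e}) ∪ X_{C,e}]` is chordal. -/
def HasChordalProperty {V : Type u} (G : SimpleGraph V) : Prop :=
  ∃ (v : V) (c : G.Walk v v) (a b : V), IsHole G c ∧ s(a, b) ∈ c.edges ∧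
    Chordal (G.induce (Uset G c a b ∪ Xce G c a b))

/-- `h(G)`: the number of holes of `G`, counted by their edge sets. -/
noncomputable def holeCount {V : Type u} (G : SimpleGraph V) : ℕ :=
  Nat.card {s : Set (Sym2 V) // ∃ (v : V) (c : G.Walk v v), IsHole G c ∧ s = {e | e ∈ c.edges}}

/-- `G` together with `k` added isolated vertices. -/
def addIsolated {V : Type u} (G : SimpleGraph V) (k : ℕ) : SimpleGraph (V ⊕ Fin k) where
  Adj a b := ∃ x y, G.Adj x y ∧ a = Sum.inl x ∧ b = Sum.inl y
  symm := by
    refine ⟨?_⟩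
    rintro a b ⟨x, y, h, rfl, rfl⟩
    exact ⟨y, x, h.symm, rfl, rfl⟩
  loopless := by
    refine ⟨?_⟩
    rintro a ⟨x, y, h, rfl, hy⟩
    obtain rfl := Sum.inl.inj hy
    exact G.irrefl h

/-- A digraph (given by its arc relation) is acyclic: it has no directed closed walk. -/
def IsAcyclicDigraph {α : Type u} (r : α → α → Prop) : Prop :=
  ∀ x, ¬ Relation.TransGen r x x

/-- `H` is the competition graph of some acyclic digraph: distinct vertices are adjacent
iff they have a common out-neighbour (prey). -/
def IsCompetitionGraphOfAcyclicDigraph {α : Type u} (H : SimpleGraph α) : Prop :=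
  ∃ r : α → α → Prop, IsAcyclicDigraph r ∧
    ∀ a b : α, H.Adj a b ↔ a ≠ b ∧ ∃ x, r a x ∧ r b x

/-- The competition number `k(G)`: the least `k` such that `G` together with `k` isolated
vertices is the competition graph of an acyclic digraph. -/
noncomputable def compNumber {V : Type u} (G : SimpleGraph V) : ℕ :=
  sInf {k | IsCompetitionGraphOfAcyclicDigraph (addIsolated G k)}

/-! `U_{C*,e*}` is a union of connected components of `G − X_{C*,e*}`, so no vertex outside
`V(U_{C*,e*}) ∪ X_{C*,e*}` has a neighbour in `U_{C*,e*}`. A vertex of `T_{C,e}` outside that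
set is adjacent to both ends `u, w` of `e`, which lie on `C` and hence in
`V(U_{C*,e*}) ∪ X_{C*,e*}`; so they lie in `X_{C*,e*}`. -/

section Components

variable {V : Type u} {G : SimpleGraph V} {v : V} {c : G.Walk v v} {a b : V}

theorem InQ.of_reachable {x y : V} (hx : x ∈ (Xce G c a b)ᶜ) (hy : y ∈ (Xce G c a b)ᶜ)
    (hxy : (G.induce (Xce G c a b)ᶜ).Reachable ⟨x, hx⟩ ⟨y, hy⟩) (hQ : InQ G c a b x) :
    InQ G c a b y := by
  obtain ⟨_, z, hz, hzc, hza, hzb, hxz⟩ := hQ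
  exact ⟨hy, z, hz, hzc, hza, hzb, hxy.symm.trans hxz⟩

theorem mem_Uset_of_reachable {x y : V} (hx : x ∈ (Xce G c a b)ᶜ) (hy : y ∈ (Xce G c a b)ᶜ)
    (hxy : (G.induce (Xce G c a b)ᶜ).Reachable ⟨x, hx⟩ ⟨y, hy⟩) (hyU : y ∈ Uset G c a b) :
    x ∈ Uset G c a b := by
  obtain ⟨_, hyQ, t, ht, htT, htQ, hyt⟩ := hyU
  exact ⟨hx, fun hxQ => hyQ (hxQ.of_reachable hx hy hxy), t, ht, htT, htQ, hxy.trans hyt⟩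

theorem mem_Uset_of_adj {x y : V} (hx : x ∉ Xce G c a b) (hxy : G.Adj x y)
    (hyU : y ∈ Uset G c a b) : x ∈ Uset G c a b :=
  mem_Uset_of_reachable hx hyU.1 (Adj.reachable (by simpa using hxy)) hyU

theorem mem_Xce_of_adj_of_notMem {x y : V} (hx : x ∉ Uset G c a b ∪ Xce G c a b)
    (hxy : G.Adj x y) (hy : y ∈ Uset G c a b ∪ Xce G c a b) : y ∈ Xce G c a b :=
  hy.resolve_left fun hyU => hx (Or.inl (mem_Uset_of_adj (fun h => hx (Or.inr h)) hxy hyU))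

end Components

theorem claim1_endpoints_in_Xce_general
    {V : Type u} (G : SimpleGraph V)
    {v₀ : V} (c₀ : G.Walk v₀ v₀)
    {p q : V}
    {v₁ : V} (c : G.Walk v₁ v₁)
    (hsub : ∀ x ∈ c.support, x ∈ Uset G c₀ p q ∪ Xce G c₀ p q)
    {u w : V} (huw : s(u, w) ∈ c.edges)
    (hT : ¬ Tset G c u w ⊆ Uset G c₀ p q ∪ Xce G c₀ p q) :
    u ∈ Xce G c₀ p q ∧ w ∈ Xce G c₀ p q := by
  obtain ⟨t, ⟨htu, htw, -⟩, ht⟩ := Set.not_subset.mp hT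
  exact ⟨mem_Xce_of_adj_of_notMem ht htu.symm (hsub u (c.fst_mem_support_of_mem_edges huw)),
    mem_Xce_of_adj_of_notMem ht htw (hsub w (c.snd_mem_support_of_mem_edges huw))⟩

/-- Claim 1: Let `C` be a hole of `G[V(U_{C*,e*}) ∪ X_{C*,e*}]`. If some
edge `e = uw` of `C` has `T_{C,e} ⊄ V(U_{C*,e*}) ∪ X_{C*,e*}`, then `u, w ∈ X_{C*,e*}`. -/
theorem claim1_endpoints_in_Xce
    {V : Type u} (G : SimpleGraph V) (hfree : K222Free G) (hhed : HoleEdgeDisjoint G)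
    (hS : ∀ (v : V) (c : G.Walk v v), IsHole G c →
      ∀ a b : V, s(a, b) ∈ c.edges → (Sset G c a b).Nonempty)
    {v₀ : V} (c₀ : G.Walk v₀ v₀) (hc₀ : IsHole G c₀)
    {p q : V} (hpq : s(p, q) ∈ c₀.edges)
    {v₁ : V} (c : G.Walk v₁ v₁) (hc : IsHole G c)
    (hsub : ∀ x ∈ c.support, x ∈ Uset G c₀ p q ∪ Xce G c₀ p q)
    {u w : V} (huw : s(u, w) ∈ c.edges)
    (hT : ¬ Tset G c u w ⊆ Uset G c₀ p q ∪ Xce G c₀ p q) :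
    u ∈ Xce G c₀ p q ∧ w ∈ Xce G c₀ p q :=
  claim1_endpoints_in_Xce_general G c₀ c hsub huw hT
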